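/- If H is an α-acyclic linear hypergraph, then its Levi graph B(H) is a forest, i.e. B(H) contains no cycle. -/

import Mathlib

structure HGraph (V : Type*) where
  verts : Finset V
  edges : Finset (Finset V)
  edge_sub : ∀ s ∈ edges, s ⊆ verts
  edge_nonempty : ∀ s ∈ edges, s.Nonempty

namespace HGraph

variable {V : Type*} [DecidableEq V]

/-- The degree of a vertex: the number of edges containing it. -/
def degree (H : HGraph V) (x : V) : ℕ :=
  (H.edges.filter fun s => x ∈ s).card

/-- Δ(H): the maximum degree. -/
def maxDegree (H : HGraph V) : ℕ :=
  H.verts.sup H.degree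

/-- r(H): the maximum cardinality of an edge. -/
def rank (H : HGraph V) : ℕ :=
  H.edges.sup Finset.card

/-- An incidence of H: a pair (x, s) with s an edge and x ∈ s. -/
def IsIncidence (H : HGraph V) (p : V × Finset V) : Prop :=
  p.2 ∈ H.edges ∧ p.1 ∈ p.2

/-- Two (distinct) incidences (x,s), (x',s') are adjacent if x = x', or {x,x'} ⊆ s,
or {x,x'} ⊆ s'. -/
def IncAdj (p q : V × Finset V) : Prop :=
  p ≠ q ∧ (p.1 = q.1 ∨ ({p.1, q.1} : Finset V) ⊆ p.2 ∨ ({p.1, q.1} : Finset V) ⊆ q.2)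

/-- A proper incidence k-coloring: adjacent incidences get distinct colors from {0, ..., k-1}. -/
def HasIncidenceColoring (H : HGraph V) (k : ℕ) : Prop :=
  ∃ φ : V × Finset V → ℕ,
    (∀ p, H.IsIncidence p → φ p < k) ∧
    (∀ p q, H.IsIncidence p → H.IsIncidence q → IncAdj p q → φ p ≠ φ q)

/-- χ_I(H): the incidence chromatic number. -/
noncomputable def incChromaticNumber (H : HGraph V) : ℕ :=
  sInf {k | H.HasIncidenceColoring k}

/-- H is t-quasi-linear: two distinct edges meet in at most t vertices, and two
distinct vertices lie in at most t common edges. -/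
def QuasiLinear (H : HGraph V) (t : ℕ) : Prop :=
  (∀ s ∈ H.edges, ∀ s' ∈ H.edges, s ≠ s' → (s ∩ s').card ≤ t) ∧
  (∀ x ∈ H.verts, ∀ y ∈ H.verts, x ≠ y →
    (H.edges.filter fun s => x ∈ s ∧ y ∈ s).card ≤ t)

/-- H is linear: two distinct edges meet in at most one vertex. -/
def Linear (H : HGraph V) : Prop :=
  ∀ s ∈ H.edges, ∀ s' ∈ H.edges, s ≠ s' → (s ∩ s').card ≤ 1

/-- The Levi graph B(H): bipartite incidence graph between vertices and edges of H. -/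
def Levi (H : HGraph V) : SimpleGraph (V ⊕ Finset V) where
  Adj a b :=
    match a, b with
    | Sum.inl x, Sum.inr s => s ∈ H.edges ∧ x ∈ s
    | Sum.inr s, Sum.inl x => s ∈ H.edges ∧ x ∈ s
    | _, _ => False
  symm := by
    exact ⟨by rintro (x | s) (y | t) h <;> exact h⟩
  loopless := by
    exact ⟨by rintro (x | s) h <;> exact h⟩

end HGraph

/-- One step of GYO-reduction on a pair (vertex set, edge set):
(i) delete a vertex contained in only one edge (together with its occurrence in edges);
(ii) delete an edge contained in another edge;
(iii) delete an edge containing no vertex. -/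
inductive GYOStep {V : Type*} [DecidableEq V] :
    Finset V × Finset (Finset V) → Finset V × Finset (Finset V) → Prop
  | delVertex (X : Finset V) (S : Finset (Finset V)) (x : V) (hx : x ∈ X)
      (h : (S.filter fun s => x ∈ s).card ≤ 1) :
      GYOStep (X, S) (X.erase x, S.image fun s => s.erase x)
  | delSubEdge (X : Finset V) (S : Finset (Finset V)) (s s' : Finset V)
      (hs : s ∈ S) (hs' : s' ∈ S) (hne : s ≠ s') (hsub : s ⊆ s') :
      GYOStep (X, S) (X, S.erase s)
  | delEmptyEdge (X : Finset V) (S : Finset (Finset V)) (h : (∅ : Finset V) ∈ S) :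
      GYOStep (X, S) (X, S.erase ∅)

/-- H is α-acyclic: GYO-reduction reduces it to the empty hypergraph. -/
def HGraph.IsAlphaAcyclic {V : Type*} [DecidableEq V] (H : HGraph V) : Prop :=
  Relation.ReflTransGen GYOStep (H.verts, H.edges) (∅, ∅)


section AuxProof
open SimpleGraph

set_option linter.unusedSectionVars false

variable {V : Type*} [DecidableEq V]

def BergeCycle (S : Finset (Finset V)) : Prop :=
  ∃ (n : ℕ) (e : ℕ → Finset V) (v : ℕ → V), 2 ≤ n ∧
    (∀ i < n, ∀ j < n, i ≠ j → e i ≠ e j) ∧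
    (∀ i < n, ∀ j < n, i ≠ j → v i ≠ v j) ∧
    (∀ i < n, e i ∈ S ∧ v i ∈ e i ∧ v ((i + 1) % n) ∈ e i)

def LinSet (S : Finset (Finset V)) : Prop :=
  ∀ s ∈ S, ∀ s' ∈ S, s ≠ s' → (s ∩ s').card ≤ 1

lemma succ_mod_ne {n i : ℕ} (hn : 2 ≤ n) (hi : i < n) : (i + 1) % n ≠ i := by
  rcases Nat.lt_or_ge (i+1) n with h | h
  · rw [Nat.mod_eq_of_lt h]; omega
  · have : i + 1 = n := by omega
    rw [this, Nat.mod_self]; omega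

lemma bc_two_mem {S : Finset (Finset V)} {n : ℕ} {e : ℕ → Finset V} {v : ℕ → V}
    (hn : 2 ≤ n) (he : ∀ i < n, ∀ j < n, i ≠ j → e i ≠ e j)
    (hc : ∀ i < n, e i ∈ S ∧ v i ∈ e i ∧ v ((i + 1) % n) ∈ e i)
    {j : ℕ} (hj : j < n) :
    ∃ i < n, i ≠ j ∧ e i ≠ e j ∧ e i ∈ S ∧ v j ∈ e i := by
  obtain ⟨i, hi, hij, h1⟩ : ∃ i, i < n ∧ i ≠ j ∧ (i + 1) % n = j := by
    rcases eq_or_ne j 0 with rfl | h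
    · exact ⟨n - 1, by omega, by omega, by
        rw [Nat.sub_add_cancel (by omega), Nat.mod_self]⟩
    · exact ⟨j - 1, by omega, by omega, by
        rw [Nat.sub_add_cancel (by omega), Nat.mod_eq_of_lt hj]⟩
  refine ⟨i, hi, hij, he _ hi _ hj hij, (hc _ hi).1, ?_⟩
  have := (hc _ hi).2.2
  rwa [h1] at this

/-- two distinct cycle vertices lie in every cycle edge -/
lemma two_le_card_edge {n : ℕ} {e : ℕ → Finset V} {v : ℕ → V}
    (hn : 2 ≤ n) (hv : ∀ i < n, ∀ j < n, i ≠ j → v i ≠ v j)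
    (hc1 : ∀ i < n, v i ∈ e i ∧ v ((i + 1) % n) ∈ e i)
    {i : ℕ} (hi : i < n) {t : Finset V} (ht : e i ⊆ t) : 2 ≤ ((e i) ∩ t).card := by
  have h1 : (i + 1) % n < n := Nat.mod_lt _ (by omega)
  have hne : v ((i + 1) % n) ≠ v i := hv _ h1 _ hi (succ_mod_ne hn hi)
  have : ({v i, v ((i+1) % n)} : Finset V) ⊆ e i ∩ t := by
    intro a ha
    simp only [Finset.mem_insert, Finset.mem_singleton] at ha
    rcases ha with rfl | rfl
    · exact Finset.mem_inter.2 ⟨(hc1 _ hi).1, ht (hc1 _ hi).1⟩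
    · exact Finset.mem_inter.2 ⟨(hc1 _ hi).2, ht (hc1 _ hi).2⟩
  calc 2 = ({v i, v ((i+1) % n)} : Finset V).card := by
        rw [Finset.card_insert_of_notMem (by simpa using hne.symm), Finset.card_singleton]
    _ ≤ _ := Finset.card_le_card this


lemma lin_step {p q : Finset V × Finset (Finset V)} (h : GYOStep p q)
    (hl : LinSet p.2) : LinSet q.2 := by
  cases h with
  | delVertex X S x hx hd =>
    intro a ha b hb hab
    simp only [Finset.mem_image] at ha hb
    obtain ⟨s, hs, rfl⟩ := ha
    obtain ⟨s', hs', rfl⟩ := hb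
    have hss : s ≠ s' := by rintro rfl; exact hab rfl
    calc (s.erase x ∩ s'.erase x).card ≤ (s ∩ s').card :=
          Finset.card_le_card (Finset.inter_subset_inter (Finset.erase_subset _ _)
            (Finset.erase_subset _ _))
      _ ≤ 1 := hl s hs s' hs' hss
  | delSubEdge X S s s' hs hs' hne hsub =>
    intro a ha b hb hab
    exact hl a (Finset.mem_of_mem_erase ha) b (Finset.mem_of_mem_erase hb) hab
  | delEmptyEdge X S hS =>
    intro a ha b hb hab
    exact hl a (Finset.mem_of_mem_erase ha) b (Finset.mem_of_mem_erase hb) hab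

lemma bc_step {p q : Finset V × Finset (Finset V)} (h : GYOStep p q)
    (hl : LinSet p.2) (hb : BergeCycle p.2) : BergeCycle q.2 := by
  obtain ⟨n, e, v, hn, he, hv, hc⟩ := hb
  cases h with
  | delVertex X S x hx hd =>
    -- x is not among the cycle vertices
    have hxv : ∀ j < n, x ≠ v j := by
      intro j hj hxj
      obtain ⟨i, hi, hij, heij, heiS, hvj⟩ := bc_two_mem hn he hc hj
      have h2 : ({e i, e j} : Finset (Finset V)) ⊆ S.filter fun s => x ∈ s := by
        intro a ha
        simp only [Finset.mem_insert, Finset.mem_singleton] at ha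
        rcases ha with rfl | rfl
        · exact Finset.mem_filter.2 ⟨heiS, hxj ▸ hvj⟩
        · exact Finset.mem_filter.2 ⟨(hc _ hj).1, hxj ▸ (hc _ hj).2.1⟩
      have : 2 ≤ (S.filter fun s => x ∈ s).card := by
        calc 2 = ({e i, e j} : Finset (Finset V)).card := by
              rw [Finset.card_insert_of_notMem (by simpa using heij),
                Finset.card_singleton]
          _ ≤ _ := Finset.card_le_card h2
      omega
    refine ⟨n, fun i => (e i).erase x, v, hn, ?_, hv, ?_⟩
    · -- distinctness of erased edges
      intro i hi j hj hij hbad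
      simp only at hbad
      have heij := he i hi j hj hij
      by_cases hxi : x ∈ e i
      · by_cases hxj : x ∈ e j
        · -- degree ≥ 2
          have h2 : ({e i, e j} : Finset (Finset V)) ⊆ S.filter fun s => x ∈ s := by
            intro a ha
            simp only [Finset.mem_insert, Finset.mem_singleton] at ha
            rcases ha with rfl | rfl
            · exact Finset.mem_filter.2 ⟨(hc _ hi).1, hxi⟩
            · exact Finset.mem_filter.2 ⟨(hc _ hj).1, hxj⟩
          have : 2 ≤ (S.filter fun s => x ∈ s).card := by
            calc 2 = ({e i, e j} : Finset (Finset V)).card := by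
                  rw [Finset.card_insert_of_notMem (by simpa using heij),
                    Finset.card_singleton]
              _ ≤ _ := Finset.card_le_card h2
          omega
        · -- e j = e j.erase x = e i.erase x ⊆ e i
          have hsub : e j ⊆ e i := by
            rw [Finset.erase_eq_of_notMem hxj] at hbad
            exact hbad ▸ Finset.erase_subset _ _
          have := two_le_card_edge hn hv (fun i hi => ⟨(hc i hi).2.1, (hc i hi).2.2⟩)
            hj hsub
          have := hl (e j) (hc _ hj).1 (e i) (hc _ hi).1 heij.symm
          omega
      · by_cases hxj : x ∈ e j
        · have hsub : e i ⊆ e j := by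
            rw [Finset.erase_eq_of_notMem hxi] at hbad
            exact hbad ▸ Finset.erase_subset _ _
          have := two_le_card_edge hn hv (fun i hi => ⟨(hc i hi).2.1, (hc i hi).2.2⟩)
            hi hsub
          have := hl (e i) (hc _ hi).1 (e j) (hc _ hj).1 heij
          omega
        · rw [Finset.erase_eq_of_notMem hxi, Finset.erase_eq_of_notMem hxj] at hbad
          exact heij hbad
    · intro i hi
      refine ⟨Finset.mem_image_of_mem _ (hc _ hi).1, ?_, ?_⟩
      · exact Finset.mem_erase.2 ⟨(hxv _ hi).symm ∘ Eq.symm ∘ Eq.symm, (hc _ hi).2.1⟩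
      · have h1 : (i + 1) % n < n := Nat.mod_lt _ (by omega)
        exact Finset.mem_erase.2 ⟨fun hh => hxv _ h1 hh.symm, (hc _ hi).2.2⟩
  | delSubEdge X S s s' hs hs' hne hsub =>
    refine ⟨n, e, v, hn, he, hv, fun i hi => ⟨?_, (hc _ hi).2.1, (hc _ hi).2.2⟩⟩
    have hne2 : e i ≠ s := by
      rintro rfl
      have h2 := two_le_card_edge hn hv (fun i hi => ⟨(hc i hi).2.1, (hc i hi).2.2⟩)
        hi hsub
      have := hl (e i) hs s' hs' hne
      omega
    exact Finset.mem_erase.2 ⟨hne2, (hc _ hi).1⟩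
  | delEmptyEdge X S hS =>
    refine ⟨n, e, v, hn, he, hv, fun i hi => ⟨?_, (hc _ hi).2.1, (hc _ hi).2.2⟩⟩
    refine Finset.mem_erase.2 ⟨?_, (hc _ hi).1⟩
    intro hh
    exact absurd ((hh ▸ (hc _ hi).2.1) : v i ∈ (∅ : Finset V)) (by simp)

lemma no_bc_of_acyclic {p : Finset V × Finset (Finset V)}
    (h : Relation.ReflTransGen GYOStep p (∅, ∅)) (hl : LinSet p.2) : ¬ BergeCycle p.2 := by
  induction h using Relation.ReflTransGen.head_induction_on with
  | refl =>
    rintro ⟨n, e, v, hn, -, -, hc⟩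
    exact absurd ((hc 0 (by omega)).1) (by simp)
  | head hstep _ ih =>
    intro hb
    exact ih (lin_step hstep hl) (bc_step hstep hl hb)

lemma walk_support_getElem {W : Type*} {G : SimpleGraph W} {u v : W} (p : G.Walk u v) (i : ℕ)
    (h : i < p.support.length) : p.support[i] = p.getVert i := by
  induction p generalizing i with
  | nil => simp at h; subst h; simp [Walk.getVert]
  | cons hadj q ih =>
    cases i with
    | zero => simp [Walk.getVert]
    | succ i =>
      simp only [Walk.support_cons, List.getElem_cons_succ, Walk.getVert_cons_succ]
      exact ih i (by simpa [Walk.length_support] using h)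

lemma cycle_getVert_injOn {W : Type*} {G : SimpleGraph W} {u : W} {p : G.Walk u u} (hp : p.IsCycle)
    {i j : ℕ} (hi1 : 1 ≤ i) (hi2 : i ≤ p.length) (hj1 : 1 ≤ j) (hj2 : j ≤ p.length)
    (h : p.getVert i = p.getVert j) : i = j := by
  have hnd : p.support.tail.Nodup := hp.2
  have hlen : p.support.length = p.length + 1 := p.length_support
  have htl : p.support.tail.length = p.length := by
    rw [List.length_tail, hlen]; omega
  have key : ∀ k : ℕ, 1 ≤ k → k ≤ p.length → ∀ (hb : k - 1 < p.support.tail.length), p.support.tail[k-1]'hb = p.getVert k := by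
    intro k hk1 hk2 hb
    have : p.support.tail[k-1]'hb = p.support[k]'(by omega) := by
      rw [List.getElem_tail]
      congr 1
      omega
    rw [this, walk_support_getElem]
  have hii := key i hi1 hi2 (by omega)
  have hjj := key j hj1 hj2 (by omega)
  have : p.support.tail[i-1]'(by omega) = p.support.tail[j-1]'(by omega) := by
    rw [hii, hjj, h]
  have := (List.Nodup.getElem_inj_iff hnd).1 this
  omega

namespace HGraph

lemma levi_adj_flip (H : HGraph V) {a b : V ⊕ Finset V} (h : H.Levi.Adj a b) :
    b.isLeft = !a.isLeft := by
  rcases a with x | s <;> rcases b with y | t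
  · exact absurd h (fun h' => h')
  · simp
  · simp
  · exact absurd h (fun h' => h')

lemma levi_adj_inl_inr (H : HGraph V) {x : V} {s : Finset V}
    (h : H.Levi.Adj (Sum.inl x) (Sum.inr s)) : s ∈ H.edges ∧ x ∈ s := h

lemma levi_adj_inr_inl (H : HGraph V) {x : V} {s : Finset V}
    (h : H.Levi.Adj (Sum.inr s) (Sum.inl x)) : s ∈ H.edges ∧ x ∈ s := h

lemma levi_cycle_to_bc (H : HGraph V) {x₀ : V}
    (p : H.Levi.Walk (Sum.inl x₀) (Sum.inl x₀)) (hp : p.IsCycle) :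
    BergeCycle H.edges := by
  set L := p.length with hLdef
  have hL3 : 3 ≤ L := hp.three_le_length
  -- parity
  have par : ∀ i, i ≤ L → ((p.getVert i).isLeft ↔ Even i) := by
    intro i
    induction i with
    | zero => intro _; simp [Walk.getVert_zero]
    | succ i ih =>
      intro h
      have hadj := p.adj_getVert_succ (show i < p.length by omega)
      have hflip := H.levi_adj_flip hadj
      have ihh := ih (by omega)
      rw [show ((p.getVert (i+1)).isLeft = true) = ((!(p.getVert i).isLeft) = true) from by rw [hflip],
        Nat.even_add_one, ← ihh]
      cases hb : (p.getVert i).isLeft <;> simp [hb]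
  have hevenL : Even L := by
    refine (par L le_rfl).1 ?_
    rw [hLdef, Walk.getVert_length]
    rfl
  obtain ⟨n, hn2⟩ := hevenL
  have hLn : L = 2 * n := by omega
  have hn : 2 ≤ n := by omega
  -- the vertex / edge extractors
  set v : ℕ → V := fun i => ((p.getVert (2 * i)).getLeft?).getD x₀ with hv
  set e : ℕ → Finset V := fun i => ((p.getVert (2 * i + 1)).getRight?).getD ∅ with he
  have hgetv : ∀ i ≤ n, p.getVert (2 * i) = Sum.inl (v i) := by
    intro i hi
    have : (p.getVert (2 * i)).isLeft := (par (2 * i) (by omega)).2 ⟨i, by ring⟩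
    obtain ⟨y, hy⟩ := Sum.isLeft_iff.1 this
    simp [hv, hy]
  have hgete : ∀ i < n, p.getVert (2 * i + 1) = Sum.inr (e i) := by
    intro i hi
    have hodd : ¬ Even (2 * i + 1) := by simp [Nat.even_add_one, Nat.even_mul]
    rcases h3 : p.getVert (2 * i + 1) with y | t
    · exact absurd ((par _ (by omega)).1 (by rw [h3]; rfl)) hodd
    · simp [he, h3]
  -- main incidences
  have hinc : ∀ i < n, e i ∈ H.edges ∧ v i ∈ e i ∧ v ((i + 1) % n) ∈ e i := by
    intro i hi
    have hA1 := p.adj_getVert_succ (show 2 * i < p.length by omega)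
    rw [hgetv i (by omega), hgete i hi] at hA1
    have h1 := H.levi_adj_inl_inr hA1
    have hA2 := p.adj_getVert_succ (show 2 * i + 1 < p.length by omega)
    have hwrap : p.getVert (2 * i + 1 + 1) = Sum.inl (v ((i + 1) % n)) := by
      rcases Nat.lt_or_ge (i + 1) n with hlt | hge
      · rw [Nat.mod_eq_of_lt hlt]
        have : 2 * i + 1 + 1 = 2 * (i + 1) := by ring
        rw [this]
        exact hgetv (i + 1) (by omega)
      · have hieq : i = n - 1 := by omega
        have h0 : (i + 1) % n = 0 := by
          rw [show i + 1 = n by omega, Nat.mod_self]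
        rw [h0]
        have hL : 2 * i + 1 + 1 = L := by omega
        rw [hL, hLdef, Walk.getVert_length]
        have hv0 : p.getVert 0 = Sum.inl (v 0) := hgetv 0 (by omega)
        rw [Walk.getVert_zero] at hv0
        rw [← hv0]
    rw [hgete i hi, hwrap] at hA2
    have h2 := H.levi_adj_inr_inl hA2
    exact ⟨h1.1, h1.2, h2.2⟩
  -- injectivity of e
  have hinje : ∀ i < n, ∀ j < n, i ≠ j → e i ≠ e j := by
    intro i hi j hj hij hbad
    have : p.getVert (2 * i + 1) = p.getVert (2 * j + 1) := by
      rw [hgete i hi, hgete j hj, hbad]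
    have := cycle_getVert_injOn hp (by omega) (by omega) (by omega) (by omega) this
    omega
  -- injectivity of v
  have hinjv : ∀ i < n, ∀ j < n, i ≠ j → v i ≠ v j := by
    intro i hi j hj hij hbad
    have key : ∀ k ≤ n, p.getVert (if k = 0 then L else 2 * k) = Sum.inl (v k) := by
      intro k hk
      rcases eq_or_ne k 0 with rfl | hk0
      · rw [if_pos rfl, hLdef, Walk.getVert_length]
        have := hgetv 0 (by omega)
        rw [Walk.getVert_zero] at this
        rw [← this]
      · rw [if_neg hk0]
        exact hgetv k hk
    have : p.getVert (if i = 0 then L else 2 * i) = p.getVert (if j = 0 then L else 2 * j) := by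
      rw [key i (by omega), key j (by omega), hbad]
    have := cycle_getVert_injOn hp
      (by split <;> omega) (by split <;> omega) (by split <;> omega) (by split <;> omega) this
    revert this
    split <;> split <;> omega
  exact ⟨n, e, v, hn, hinje, hinjv, hinc⟩


end HGraph

end AuxProof

theorem statement_13 {V : Type*} [DecidableEq V] (H : HGraph V)
    (hlin : H.Linear) (hac : H.IsAlphaAcyclic) : H.Levi.IsAcyclic := by
  intro u c hc
  have hnobc : ¬ BergeCycle H.edges := no_bc_of_acyclic hac hlin
  refine hnobc ?_
  rcases u with x | s
  · exact H.levi_cycle_to_bc c hc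
  · have hlen : 0 < c.length := by have := hc.three_le_length; omega
    have hadj := c.adj_getVert_succ hlen
    rw [SimpleGraph.Walk.getVert_zero] at hadj
    have hflip := H.levi_adj_flip hadj
    rcases h1 : c.getVert 1 with x₀ | t
    · have hmem : (Sum.inl x₀ : V ⊕ Finset V) ∈ c.support :=
        SimpleGraph.Walk.mem_support_iff_exists_getVert.2 ⟨1, h1, by omega⟩
      exact H.levi_cycle_to_bc (c.rotate _ hmem) (hc.rotate hmem)
    · rw [h1] at hflip
      simp at hflip
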